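/- For p ≥ 2 and all real x, y: (Ψ(y) − Ψ(x))·(y − x) ≥ 2^(2−p)·|y − x|^p, where Ψ(x) = |x|^(p−2)·x. -/
import Mathlib


noncomputable def Psi (p : ℝ) (x : ℝ) : ℝ := Real.sign x * |x| ^ (p - 1)

lemma psi_aux_super {q a b : ℝ} (hq : 1 ≤ q) (ha : 0 ≤ a) (hb : 0 ≤ b) :
    a ^ q + b ^ q ≤ (a + b) ^ q := by
  have h := NNReal.add_rpow_le_rpow_add a.toNNReal b.toNNReal hq
  have := (NNReal.coe_le_coe).2 h
  push_cast at this
  rwa [Real.coe_toNNReal _ ha, Real.coe_toNNReal _ hb] at this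

lemma psi_aux_mean {q a b : ℝ} (hq : 1 ≤ q) (ha : 0 ≤ a) (hb : 0 ≤ b) :
    (a + b) ^ q ≤ 2 ^ (q - 1) * (a ^ q + b ^ q) := by
  have h := NNReal.rpow_add_le_mul_rpow_add_rpow a.toNNReal b.toNNReal hq
  have := (NNReal.coe_le_coe).2 h
  push_cast at this
  rwa [Real.coe_toNNReal _ ha, Real.coe_toNNReal _ hb] at this

lemma Psi_of_nonneg {p x : ℝ} (hp : 2 ≤ p) (hx : 0 ≤ x) : Psi p x = x ^ (p - 1) := by
  rcases eq_or_lt_of_le hx with h | h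
  · simp [Psi, ← h, Real.zero_rpow (by linarith : p - 1 ≠ 0)]
  · rw [Psi, Real.sign_of_pos h, abs_of_pos h, one_mul]

lemma Psi_neg (p x : ℝ) : Psi p (-x) = -Psi p x := by
  simp [Psi, Real.sign_neg]

lemma psi_key {p : ℝ} (hp : 2 ≤ p) {a b : ℝ} (hab : a ≤ b) :
    2 ^ (2 - p) * (b - a) ^ (p - 1) ≤ Psi p b - Psi p a := by
  have hq : (1 : ℝ) ≤ p - 1 := by linarith
  have htwo : (2 : ℝ) ^ (2 - p) ≤ 1 :=
    Real.rpow_le_one_of_one_le_of_nonpos one_le_two (by linarith)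
  have hba : (0 : ℝ) ≤ b - a := by linarith
  rcases le_or_gt 0 a with ha | ha
  · -- 0 ≤ a ≤ b
    have hb : 0 ≤ b := le_trans ha hab
    rw [Psi_of_nonneg hp ha, Psi_of_nonneg hp hb]
    have h := psi_aux_super hq ha hba
    rw [add_sub_cancel] at h
    have h1 : (b - a) ^ (p - 1) ≤ b ^ (p - 1) - a ^ (p - 1) := by linarith
    calc 2 ^ (2 - p) * (b - a) ^ (p - 1) ≤ 1 * (b - a) ^ (p - 1) :=
          mul_le_mul_of_nonneg_right htwo (Real.rpow_nonneg hba _)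
      _ = (b - a) ^ (p - 1) := one_mul _
      _ ≤ b ^ (p - 1) - a ^ (p - 1) := h1
  · rcases le_or_gt 0 b with hb | hb
    · -- a < 0 ≤ b
      have hna : 0 ≤ -a := by linarith
      rw [Psi_of_nonneg hp hb, show Psi p a = - Psi p (-a) by rw [Psi_neg]; ring,
        Psi_of_nonneg hp hna, sub_neg_eq_add]
      have h := psi_aux_mean hq hb hna
      rw [show b + -a = b - a by ring] at h
      have h2 : 2 ^ (2 - p) * (b - a) ^ (p - 1) ≤
          2 ^ (2 - p) * (2 ^ (p - 1 - 1) * (b ^ (p - 1) + (-a) ^ (p - 1))) :=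
        mul_le_mul_of_nonneg_left h (Real.rpow_nonneg (by norm_num) _)
      have h3 : (2 : ℝ) ^ (2 - p) * 2 ^ (p - 1 - 1) = 1 := by
        rw [← Real.rpow_add (by norm_num),
          show 2 - p + (p - 1 - 1) = 0 by ring, Real.rpow_zero]
      calc 2 ^ (2 - p) * (b - a) ^ (p - 1)
          ≤ 2 ^ (2 - p) * (2 ^ (p - 1 - 1) * (b ^ (p - 1) + (-a) ^ (p - 1))) := h2
        _ = (2 ^ (2 - p) * 2 ^ (p - 1 - 1)) * (b ^ (p - 1) + (-a) ^ (p - 1)) := by ring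
        _ = b ^ (p - 1) + (-a) ^ (p - 1) := by rw [h3, one_mul]
    · -- a ≤ b < 0
      have hnb : 0 ≤ -b := by linarith
      have hna : 0 ≤ -a := by linarith
      rw [show Psi p b = - Psi p (-b) by rw [Psi_neg]; ring,
        show Psi p a = - Psi p (-a) by rw [Psi_neg]; ring,
        Psi_of_nonneg hp hnb, Psi_of_nonneg hp hna]
      have h := psi_aux_super hq hnb hba
      rw [show -b + (b - a) = -a by ring] at h
      have h1 : (b - a) ^ (p - 1) ≤ (-a) ^ (p - 1) - (-b) ^ (p - 1) := by linarith
      calc 2 ^ (2 - p) * (b - a) ^ (p - 1) ≤ 1 * (b - a) ^ (p - 1) :=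
            mul_le_mul_of_nonneg_right htwo (Real.rpow_nonneg hba _)
        _ = (b - a) ^ (p - 1) := one_mul _
        _ ≤ (-a) ^ (p - 1) - (-b) ^ (p - 1) := h1
        _ = -(-b) ^ (p - 1) - -(-a) ^ (p - 1) := by ring

lemma psi_main_le {p : ℝ} (hp : 2 ≤ p) {x y : ℝ} (hxy : x ≤ y) :
    2 ^ (2 - p) * |y - x| ^ p ≤ (Psi p y - Psi p x) * (y - x) := by
  have hd : (0 : ℝ) ≤ y - x := by linarith
  rw [abs_of_nonneg hd]
  rcases eq_or_lt_of_le hd with h | h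
  · rw [← h, Real.zero_rpow (by linarith : p ≠ 0)]
    simp
  · have hkey := psi_key hp hxy
    have := mul_le_mul_of_nonneg_right hkey hd
    calc 2 ^ (2 - p) * (y - x) ^ p
        = 2 ^ (2 - p) * ((y - x) ^ (p - 1) * (y - x)) := by
          rw [← Real.rpow_add_one (ne_of_gt h) (p - 1), sub_add_cancel]
      _ = 2 ^ (2 - p) * (y - x) ^ (p - 1) * (y - x) := by ring
      _ ≤ (Psi p y - Psi p x) * (y - x) := this

theorem psi_monotone_p_ge_two (p : ℝ) (hp : 2 ≤ p) (x y : ℝ) :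
    2 ^ (2 - p) * |y - x| ^ p ≤ (Psi p y - Psi p x) * (y - x) := by
  rcases le_total x y with h | h
  · exact psi_main_le hp h
  · have := psi_main_le hp h
    rw [abs_sub_comm] at this
    calc 2 ^ (2 - p) * |y - x| ^ p ≤ (Psi p x - Psi p y) * (x - y) := this
      _ = (Psi p y - Psi p x) * (y - x) := by ring
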